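/- Let t ≥ 1 be an integer. Every binary string δ of length at least t² + 2t (equivalently, of length at least (t+1)² − 1) with fault count f(δ) ≤ t contains a zero-run of length at least t, i.e., t consecutive zeros. Consequently, if at most t faults occur (so that the difference vector δ satisfies f(δ) ≤ t), the Shor time decoder, which waits for t consecutive zeros in the difference vector and whose difference vector after l rounds has length l−1, stops within (t+1)² rounds of syndrome measurement. -/
import Mathlib


/-- The fault count `f(w)`: the sum of `⌈ℓ/2⌉` over the lengths `ℓ` of the maximal
one-runs of `w`, computed equivalently by greedy left-to-right matching of `11` pairs
plus leftover isolated `1`s. -/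
def faultCount : List Bool → ℕ
  | [] => 0
  | false :: w => faultCount w
  | [true] => 1
  | true :: false :: w => 1 + faultCount w
  | true :: true :: w => 1 + faultCount w

lemma faultCount_cons_false (w : List Bool) : faultCount (false :: w) = faultCount w := rfl

lemma faultCount_true_cons_cons (b : Bool) (w : List Bool) :
    faultCount (true :: b :: w) = 1 + faultCount w := by cases b <;> rfl

lemma one_le_faultCount_true (w : List Bool) : 1 ≤ faultCount (true :: w) := by
  cases w with
  | nil => simp [faultCount]
  | cons b w => rw [faultCount_true_cons_cons]; omega

lemma split_lemma : ∀ (t : ℕ) (δ : List Bool), t ≤ δ.length →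
    (List.replicate t false <+: δ) ∨
    ∃ k rest, k < t ∧ δ = List.replicate k false ++ true :: rest := by
  intro t
  induction t with
  | zero => intro δ _; exact Or.inl (List.nil_prefix)
  | succ n ih =>
    intro δ hlen
    cases δ with
    | nil => simp at hlen
    | cons b w =>
      cases b with
      | true => exact Or.inr ⟨0, w, Nat.succ_pos n, rfl⟩
      | false =>
        rcases ih w (by simpa using hlen) with ⟨s, hs⟩ | ⟨k, rest, hk, hw⟩
        · exact Or.inl ⟨s, by rw [List.replicate_succ]; simp [hs]⟩
        · exact Or.inr ⟨k + 1, rest, Nat.succ_lt_succ hk, by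
            rw [List.replicate_succ]; simp [hw]⟩

lemma faultCount_replicate_false_append (k : ℕ) (w : List Bool) :
    faultCount (List.replicate k false ++ w) = faultCount w := by
  induction k with
  | zero => rfl
  | succ n ih => rw [List.replicate_succ, List.cons_append, faultCount_cons_false, ih]

lemma main_aux : ∀ (f t : ℕ) (δ : List Bool), 1 ≤ t → faultCount δ ≤ f →
    f * (t + 1) + t ≤ δ.length → List.replicate t false <:+: δ := by
  intro f
  induction f with
  | zero =>
    intro t δ ht hf hlen
    rcases split_lemma t δ (by omega) with h | ⟨k, rest, hk, hw⟩
    · exact h.isInfix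
    · exfalso
      rw [hw, faultCount_replicate_false_append] at hf
      have := one_le_faultCount_true rest
      omega
  | succ n ih =>
    intro t δ ht hf hlen
    rcases split_lemma t δ (by omega) with h | ⟨k, rest, hk, hw⟩
    · exact h.isInfix
    · cases rest with
      | nil =>
        exfalso
        have : δ.length = k + 1 := by rw [hw]; simp
        have h1 : t + 1 ≤ (n + 1) * (t + 1) := Nat.le_mul_of_pos_left _ (by omega)
        omega
      | cons b rest' =>
        rw [hw, faultCount_replicate_false_append, faultCount_true_cons_cons] at hf
        have hlen' : δ.length = k + 2 + rest'.length := by rw [hw]; simp; omega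
        have := ih t rest' ht (by omega) (by nlinarith)
        rw [hw]
        exact this.trans ⟨List.replicate k false ++ [true, b], [], by simp⟩

/-- Every binary string of length at least `t² + 2t = (t+1)² − 1` with fault count at
most `t` contains a zero-run of length at least `t`, i.e. `t` consecutive zeros
(the pigeonhole bound behind the Shor time decoder stopping within `(t+1)²` rounds). -/
theorem shor_time_decoder_zero_run (t : ℕ) (ht : 1 ≤ t) (δ : List Bool)
    (hlen : t ^ 2 + 2 * t ≤ δ.length) (hf : faultCount δ ≤ t) :
    List.replicate t false <:+: δ := by
  exact main_aux t t δ ht hf (by nlinarith)
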